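/- arXiv:2502.08003 — 2 statements merged into one kernel-verified Lean document; each statement's English description precedes it below -/
import Mathlib

section
/- Let C ≥ 2 and T ≥ 1 be integers and let 0 < δ ≤ 1. On a probability space (Ω, ℙ), for each time t ∈ {1,…,T} and each unordered pair {i,j} of distinct elements of {1,…,C}, let X_{t,{i,j}} be a {0,1}-valued random variable with ℙ(X_{t,{i,j}} = 1) ≥ 1 − δ(C−1)/(8CT), and suppose the whole family (X_{t,{i,j}})_{t,{i,j}} is independent. For each t and ω ∈ Ω, let G_t(ω) be the simple graph on vertex set {1,…,C} in which distinct vertices i and j are adjacent if and only if X_{t,{i,j}}(ω) = 1. Then ℙ( G_t(ω) is connected for every t ∈ {1,…,T} ) ≥ 1 − Cδ. -/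
open MeasureTheory ProbabilityTheory

/-!
All edges through vertex `0`, at all `T` times, are present simultaneously with probability at
least `1 - TC·q`, where `q = δ(C-1)/(8CT)` bounds the probability that a single edge is missing:
by independence this probability is a product, and `∏ (1 - εᵢ) ≥ 1 - ∑ εᵢ`. On that event every
graph contains a spanning star and is therefore connected, and `TC·q = δ(C-1)/8 ≤ Cδ`.
-/

/-- The simple graph on `Fin C` determined by a Boolean labelling of the unordered pairs of
distinct vertices: distinct vertices `i` and `j` are adjacent iff the label of `{i,j}` is
`true`. -/
def graphOfEdges {C : ℕ} (f : {e : Sym2 (Fin C) // ¬ e.IsDiag} → Bool) :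
    SimpleGraph (Fin C) where
  Adj i j := ∃ h : i ≠ j, f ⟨s(i, j), fun hd => h (Sym2.mk_isDiag_iff.mp hd)⟩ = true
  symm := by
    constructor
    rintro i j ⟨h, hf⟩
    refine ⟨h.symm, ?_⟩
    convert hf using 2
    exact Subtype.ext (Sym2.eq_swap)
  loopless := by
    constructor
    rintro i ⟨h, -⟩
    exact h rfl

open scoped ENNReal

namespace ENNReal

lemma one_sub_add_le_mul_one_sub (x y : ℝ≥0∞) : 1 - (x + y) ≤ (1 - x) * (1 - y) := by
  rw [tsub_le_iff_right]
  calc (1 : ℝ≥0∞) ≤ (1 - y) + y := le_tsub_add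
    _ ≤ ((1 - x) + x) * (1 - y) + y := by
        gcongr
        exact le_mul_of_one_le_left' le_tsub_add
    _ = (1 - x) * (1 - y) + x * (1 - y) + y := by ring
    _ ≤ (1 - x) * (1 - y) + (x + y) := by
        rw [add_assoc]
        gcongr
        exact mul_le_of_le_one_right' tsub_le_self

lemma one_sub_sum_le_prod {ι : Type*} {s : Finset ι} {f ε : ι → ℝ≥0∞}
    (h : ∀ i ∈ s, 1 - ε i ≤ f i) : 1 - ∑ i ∈ s, ε i ≤ ∏ i ∈ s, f i := by
  classical
  induction s using Finset.induction_on with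
  | empty => simp
  | insert a s ha ih =>
    rw [Finset.sum_insert ha, Finset.prod_insert ha]
    calc 1 - (ε a + ∑ i ∈ s, ε i) ≤ (1 - ε a) * (1 - ∑ i ∈ s, ε i) :=
          one_sub_add_le_mul_one_sub _ _
      _ ≤ f a * ∏ i ∈ s, f i := by
          gcongr
          · exact h a (Finset.mem_insert_self a s)
          · exact ih fun i hi => h i (Finset.mem_insert_of_mem hi)

end ENNReal

lemma ProbabilityTheory.iIndepFun.one_sub_sum_le_measure_biInter {Ω ι β : Type*}
    [MeasurableSpace Ω] [MeasurableSpace β] {P : Measure Ω} {X : ι → Ω → β}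
    (hX : iIndepFun X P) {B : Set β} (hB : MeasurableSet B) (S : Finset ι) {ε : ι → ℝ≥0∞}
    (h : ∀ i ∈ S, 1 - ε i ≤ P (X i ⁻¹' B)) :
    1 - ∑ i ∈ S, ε i ≤ P (⋂ i ∈ S, X i ⁻¹' B) := by
  rw [hX.meas_biInter fun i _ => ⟨B, hB, rfl⟩]
  exact ENNReal.one_sub_sum_le_prod h

lemma SimpleGraph.connected_of_forall_adj {V : Type*} {G : SimpleGraph V} (v : V)
    (h : ∀ w, w ≠ v → G.Adj v w) : G.Connected := by
  have reach : ∀ w, G.Reachable v w := fun w => by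
    rcases eq_or_ne w v with rfl | hw
    · rfl
    · exact (h w hw).reachable
  have : Nonempty V := ⟨v⟩
  exact SimpleGraph.Connected.mk fun u w => (reach u).symm.trans (reach w)

def starEdges (C T : ℕ) [NeZero C] : Finset (Fin T × {e : Sym2 (Fin C) // ¬ e.IsDiag}) :=
  Finset.univ.image fun p : Fin T × {w : Fin C // w ≠ 0} =>
    (p.1, ⟨s(0, p.2), fun hd => p.2.2 (Sym2.mk_isDiag_iff.mp hd).symm⟩)

lemma card_starEdges_le (C T : ℕ) [NeZero C] : (starEdges C T).card ≤ T * C :=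
  (Finset.card_image_le).trans <| by
    simpa using Nat.mul_le_mul_left T (Fintype.card_subtype_le fun w : Fin C => w ≠ 0)

lemma graphOfEdges_connected_of_starEdges {C T : ℕ} [NeZero C]
    {f : Fin T × {e : Sym2 (Fin C) // ¬ e.IsDiag} → Bool}
    (hf : ∀ idx ∈ starEdges C T, f idx = true) (t : Fin T) :
    (graphOfEdges fun e => f (t, e)).Connected :=
  SimpleGraph.connected_of_forall_adj 0 fun w hw =>
    ⟨Ne.symm hw, hf _ <| Finset.mem_image_of_mem _ <|
      Finset.mem_univ (t, (⟨w, hw⟩ : {w : Fin C // w ≠ 0}))⟩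

lemma card_starEdges_mul_ofReal_le {C T : ℕ} [NeZero C] (hT : T ≠ 0) {δ : ℝ} (hδ : 0 ≤ δ) :
    (starEdges C T).card * ENNReal.ofReal (δ * (C - 1) / (8 * C * T)) ≤
      ENNReal.ofReal (C * δ) := by
  have hC : (1 : ℝ) ≤ C := by exact_mod_cast Nat.one_le_iff_ne_zero.mpr (NeZero.ne C)
  have hT' : (T : ℝ) ≠ 0 := by exact_mod_cast hT
  have hTCq : (T * C : ℝ) * (δ * (C - 1) / (8 * C * T)) = δ * (C - 1) / 8 := by
    field_simp
  calc (starEdges C T).card * ENNReal.ofReal (δ * (C - 1) / (8 * C * T))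
        ≤ (T * C : ℕ) * ENNReal.ofReal (δ * (C - 1) / (8 * C * T)) := by
        gcongr
        exact card_starEdges_le C T
    _ = ENNReal.ofReal (δ * (C - 1) / 8) := by
        rw [← hTCq, ENNReal.ofReal_mul (by positivity)]
        norm_cast
    _ ≤ ENNReal.ofReal (C * δ) := ENNReal.ofReal_le_ofReal (by nlinarith)

theorem random_graphs_connected_whp_chebyshev_general
    {Ω : Type*} [MeasurableSpace Ω] (P : Measure Ω) [IsProbabilityMeasure P]
    (C T : ℕ) (hC : 2 ≤ C) (hT : 1 ≤ T)
    (δ : ℝ) (hδ0 : 0 < δ)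
    (X : Fin T × {e : Sym2 (Fin C) // ¬ e.IsDiag} → Ω → Bool)
    (hprob : ∀ idx,
      ENNReal.ofReal (1 - δ * ((C : ℝ) - 1) / (8 * (C : ℝ) * (T : ℝ)))
        ≤ P {ω | X idx ω = true})
    (hindep : iIndepFun X P) :
    1 - ENNReal.ofReal ((C : ℝ) * δ) ≤
      P {ω | ∀ t : Fin T, (graphOfEdges (fun e => X (t, e) ω)).Connected} := by
  have : NeZero C := ⟨by omega⟩
  set q : ℝ := δ * ((C : ℝ) - 1) / (8 * (C : ℝ) * (T : ℝ))
  have hC' : (1 : ℝ) ≤ C := by exact_mod_cast (by omega : 1 ≤ C)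
  have hq : 0 ≤ q := div_nonneg (mul_nonneg hδ0.le (by linarith)) (by positivity)
  calc 1 - ENNReal.ofReal (C * δ) ≤ 1 - ∑ _idx ∈ starEdges C T, ENNReal.ofReal q := by
        rw [Finset.sum_const, nsmul_eq_mul]
        exact tsub_le_tsub_left (card_starEdges_mul_ofReal_le (by omega) hδ0.le) 1
    _ ≤ P (⋂ idx ∈ starEdges C T, X idx ⁻¹' {true}) :=
        hindep.one_sub_sum_le_measure_biInter (MeasurableSet.singleton true) _ fun idx _ => by
          rw [← ENNReal.ofReal_one, ← ENNReal.ofReal_sub 1 hq]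
          exact hprob idx
    _ ≤ _ := measure_mono fun ω hω => graphOfEdges_connected_of_starEdges
        (fun idx hidx => Set.mem_iInter₂.mp hω idx hidx)

/-- Proposition 13 of the paper: if, for each of `T` time steps, the edges among `C ≥ 2`
vertices are sampled independently (also across time), each edge being present with
probability at least `1 - δ(C-1)/(8CT)`, then with probability at least `1 - Cδ` the
sampled graph is connected at every time step. -/
theorem random_graphs_connected_whp_chebyshev
    {Ω : Type*} [MeasurableSpace Ω] (P : Measure Ω) [IsProbabilityMeasure P]
    (C T : ℕ) (hC : 2 ≤ C) (hT : 1 ≤ T)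
    (δ : ℝ) (hδ0 : 0 < δ) (hδ1 : δ ≤ 1)
    (X : Fin T × {e : Sym2 (Fin C) // ¬ e.IsDiag} → Ω → Bool)
    (hprob : ∀ idx,
      ENNReal.ofReal (1 - δ * ((C : ℝ) - 1) / (8 * (C : ℝ) * (T : ℝ)))
        ≤ P {ω | X idx ω = true})
    (hindep : iIndepFun X P) :
    1 - ENNReal.ofReal ((C : ℝ) * δ) ≤
      P {ω | ∀ t : Fin T, (graphOfEdges (fun e => X (t, e) ω)).Connected} :=
  random_graphs_connected_whp_chebyshev_general P C T hC hT δ hδ0 X hprob hindep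
end

section
/- Let C, M, l be integers with C ≥ 4, M ≥ C, and 2 ≤ l ≤ C − 1. Then (e/(e−1)) · (C²/M²) · ((C−l−1)!/(C−2)!) < 1, where e is Euler's number and (·)! denotes the factorial. -/
/-! The three factors are bounded by `2`, `1` and `1/2`, the first strictly because `e > 2`;
the last because `C - l - 1 < C - 2` and `(C - 2)! = (C - 2) · (C - 3)!` with `C - 2 ≥ 2`. -/

open Nat

theorem Real.exp_one_div_exp_one_sub_one_lt_two : Real.exp 1 / (Real.exp 1 - 1) < 2 := by
  have he := Real.exp_one_gt_two
  rw [div_lt_iff₀ (by linarith)]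
  linarith

theorem Nat.two_mul_factorial_le_factorial_of_lt {m n : ℕ} (hmn : m < n) (hn : 2 ≤ n) :
    2 * m ! ≤ n ! := by
  obtain ⟨k, rfl⟩ : ∃ k, n = k + 1 := ⟨n - 1, by omega⟩
  rw [Nat.factorial_succ]
  exact Nat.mul_le_mul (by omega) (Nat.factorial_le (by omega))

theorem Nat.factorial_div_factorial_le_half {m n : ℕ} (hmn : m < n) (hn : 2 ≤ n) :
    (m ! : ℝ) / n ! ≤ 1 / 2 := by
  rw [div_le_div_iff₀ (by positivity) two_pos, one_mul, mul_comm]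
  exact_mod_cast Nat.two_mul_factorial_le_factorial_of_lt hmn hn

theorem worst_case_edge_prob_lt_one_general
    (C M l : ℕ) (hC : 4 ≤ C) (hM : C ≤ M) (hl2 : 2 ≤ l) :
    (Real.exp 1 / (Real.exp 1 - 1)) * ((C : ℝ) ^ 2 / (M : ℝ) ^ 2) *
      ((Nat.factorial (C - l - 1) : ℝ) / (Nat.factorial (C - 2) : ℝ)) < 1 := by
  have hratio : (C : ℝ) ^ 2 / (M : ℝ) ^ 2 ≤ 1 :=
    div_le_one_of_le₀ (by gcongr) (by positivity)
  have hfact : ((C - l - 1)! : ℝ) / (C - 2)! ≤ 1 / 2 :=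
    Nat.factorial_div_factorial_le_half (by omega) (by omega)
  have hexp_sub_one : 0 < Real.exp 1 - 1 := by linarith [Real.exp_one_gt_two]
  calc Real.exp 1 / (Real.exp 1 - 1) * ((C : ℝ) ^ 2 / (M : ℝ) ^ 2) *
        (((C - l - 1)! : ℝ) / (C - 2)!)
      ≤ Real.exp 1 / (Real.exp 1 - 1) * 1 * (1 / 2) := by gcongr
    _ < 2 * 1 * (1 / 2) := by gcongr; exact Real.exp_one_div_exp_one_sub_one_lt_two
    _ = 1 := by norm_num

/-- For integers `C ≥ 4`, `M ≥ C` and `2 ≤ l ≤ C - 1`, one has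
`(e/(e-1)) · (C²/M²) · ((C-l-1)!/(C-2)!) < 1`. -/
theorem worst_case_edge_prob_lt_one
    (C M l : ℕ) (hC : 4 ≤ C) (hM : C ≤ M) (hl2 : 2 ≤ l) (hlC : l ≤ C - 1) :
    (Real.exp 1 / (Real.exp 1 - 1)) * ((C : ℝ) ^ 2 / (M : ℝ) ^ 2) *
      ((Nat.factorial (C - l - 1) : ℝ) / (Nat.factorial (C - 2) : ℝ)) < 1 :=
  worst_case_edge_prob_lt_one_general C M l hC hM hl2
end
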